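/- arXiv:1302.6039 — 6 statements merged into one kernel-verified Lean document; each statement's English description precedes it below -/
import Mathlib

section
/- If r_* is an integer maximizing the layer size q_n^r = C(n-r+1, r) of the Fibonacci cube, then r_* equals ⌈(5n+2-√(5n²+20n+24))/10⌉ or (5n+2-√(5n²+20n+24))/10 + 1. -/
lemma fibCube_key (a r : ℕ) :
    a.choose (r+1) * ((r+1) * (a+1)) = (a+1).choose r * ((a+1-r) * (a-r)) := by
  calc a.choose (r+1) * ((r+1)*(a+1))
      = (a.choose (r+1) * (r+1)) * (a+1) := by ring
    _ = (a.choose r * (a-r)) * (a+1) := by rw [Nat.choose_succ_right_eq]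
    _ = (a.choose r * (a+1)) * (a-r) := by ring
    _ = ((a+1).choose r * (a+1-r)) * (a-r) := by rw [Nat.choose_mul_succ_eq]
    _ = (a+1).choose r * ((a+1-r)*(a-r)) := by ring

theorem fibCube_max_layer (n : ℕ) (rs : ℕ) (hrs : rs ≤ n)
    (hmax : ∀ r ≤ n, (n - r + 1).choose r ≤ (n - rs + 1).choose rs) :
    (rs : ℤ) = ⌈(5 * (n : ℝ) + 2 - Real.sqrt (5 * n ^ 2 + 20 * n + 24)) / 10⌉ ∨
      (rs : ℝ) = (5 * (n : ℝ) + 2 - Real.sqrt (5 * n ^ 2 + 20 * n + 24)) / 10 + 1 := by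
  have hpos : 1 ≤ (n - rs + 1).choose rs := by
    have := hmax 0 (Nat.zero_le n); simpa using this
  have h2s : 2 * rs ≤ n + 1 := by
    by_contra h
    push_neg at h
    have hlt : n - rs + 1 < rs := by omega
    have := Nat.choose_eq_zero_of_lt hlt
    omega
  -- hB : Q(rs) ≤ 0 in ℤ form
  have hBint : ((n:ℤ) - 2*rs + 1) * ((n:ℤ) - 2*rs) ≤ ((rs:ℤ)+1) * ((n:ℤ) - rs + 1) := by
    rcases lt_or_ge rs n with hsn | hsn
    · have h1 : (n - rs).choose (rs+1) ≤ (n - rs + 1).choose rs := by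
        have h := hmax (rs+1) (by omega)
        have e : n - (rs+1) + 1 = n - rs := by omega
        rwa [e] at h
      have hid := fibCube_key (n - rs) rs
      have hle2 : (n - rs + 1).choose rs * ((n-rs+1-rs)*(n-rs-rs)) ≤
          (n - rs + 1).choose rs * ((rs+1)*(n-rs+1)) := by
        rw [← hid]
        exact Nat.mul_le_mul_right _ h1
      have hc : (n-rs+1-rs)*(n-rs-rs) ≤ (rs+1)*(n-rs+1) :=
        Nat.le_of_mul_le_mul_left hle2 (by omega)
      rcases le_or_gt (2*rs) n with hc2 | hc2
      · zify [show rs ≤ n - rs + 1 by omega, show rs ≤ n - rs by omega,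
          show rs ≤ n from hrs] at hc
        nlinarith [hc]
      · have hn : (n:ℤ) = 2*rs - 1 := by omega
        nlinarith [hn, Int.ofNat_nonneg rs]
    · -- rs = n, so n ≤ 1
      have hsn' : rs = n := le_antisymm hrs hsn
      have hn1 : n ≤ 1 := by omega
      interval_cases n <;> simp_all <;> norm_num
  set d : ℝ := Real.sqrt (5 * (n:ℝ) ^ 2 + 20 * n + 24) with hd
  have hDnn : (0:ℝ) ≤ 5 * (n:ℝ) ^ 2 + 20 * n + 24 := by positivity
  have hd2 : d ^ 2 = 5 * (n:ℝ) ^ 2 + 20 * n + 24 := Real.sq_sqrt hDnn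
  have hdnn : 0 ≤ d := Real.sqrt_nonneg _
  have hBR : ((n:ℝ) - 2*rs + 1) * ((n:ℝ) - 2*rs) ≤ ((rs:ℝ)+1) * ((n:ℝ) - rs + 1) := by
    exact_mod_cast hBint
  -- x ≤ rs
  have hxle : (5 * (n:ℝ) + 2 - d) / 10 ≤ rs := by
    rw [div_le_iff₀ (by norm_num)]
    by_contra h
    push_neg at h
    have h' : d < 5*(n:ℝ) + 2 - 10*rs := by linarith
    nlinarith [h', hdnn, hd2, hBR]
  have hup : ((rs:ℝ) - 1 < (5 * (n:ℝ) + 2 - d) / 10) ∨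
      ((rs:ℝ) - 1 = (5 * (n:ℝ) + 2 - d) / 10) := by
    rcases Nat.eq_zero_or_pos rs with h0 | h1
    · left
      subst h0
      rw [lt_div_iff₀ (by norm_num)]
      push_cast
      have : d < 5*(n:ℝ) + 12 := by nlinarith [hd2, hdnn]
      linarith
    · -- Q(rs - 1) ≥ 0
      have hAint : ((rs:ℤ)) * ((n:ℤ) - rs + 2) ≤ ((n:ℤ) - 2*rs + 3) * ((n:ℤ) - 2*rs + 2) := by
        obtain ⟨t, rfl⟩ : ∃ t, rs = t + 1 := ⟨rs - 1, by omega⟩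
        have h1 : (n - t + 1).choose t ≤ (n - (t+1) + 1).choose (t+1) := hmax t (by omega)
        have hid := fibCube_key (n - t) t
        have e : n - (t+1) + 1 = n - t := by omega
        rw [e] at h1 hpos
        -- hid : (n-t).choose (t+1) * ((t+1)*(n-t+1)) = (n-t+1).choose t * ((n-t+1-t)*(n-t-t))
        have hle2 : (n - t).choose (t+1) * ((t+1)*(n-t+1)) ≤
            (n - t).choose (t+1) * ((n-t+1-t)*(n-t-t)) := by
          rw [hid]
          exact Nat.mul_le_mul_right _ h1
        have hc : (t+1)*(n-t+1) ≤ (n-t+1-t)*(n-t-t) :=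
          Nat.le_of_mul_le_mul_left hle2 (by omega)
        zify [show t ≤ n - t + 1 by omega, show t ≤ n - t by omega,
          show t ≤ n by omega] at hc
        push_cast
        nlinarith [hc]
      have hAR : ((rs:ℝ)) * ((n:ℝ) - rs + 2) ≤ ((n:ℝ) - 2*rs + 3) * ((n:ℝ) - 2*rs + 2) := by
        exact_mod_cast hAint
      have hub : d ≤ 5*(n:ℝ) + 12 - 10*rs := by
        have hcn : (0:ℝ) ≤ 5*(n:ℝ) + 12 - 10*rs := by
          have : (2*rs : ℝ) ≤ (n:ℝ) + 1 := by exact_mod_cast h2s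
          linarith
        nlinarith [hd2, hdnn, hcn, hAR]
      have : (rs:ℝ) - 1 ≤ (5 * (n:ℝ) + 2 - d) / 10 := by
        rw [le_div_iff₀ (by norm_num)]
        linarith
      exact lt_or_eq_of_le this
  rcases hup with hlt | heq
  · left
    have hle1 : ⌈(5 * (n:ℝ) + 2 - d) / 10⌉ ≤ (rs:ℤ) := by
      apply Int.ceil_le.mpr
      push_cast
      exact hxle
    have hle2 : (rs:ℤ) ≤ ⌈(5 * (n:ℝ) + 2 - d) / 10⌉ := by
      have h := Int.lt_ceil.mpr (show (((rs:ℤ) - 1 : ℤ):ℝ) < (5 * (n:ℝ) + 2 - d) / 10 by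
        push_cast; exact hlt)
      omega
    omega
  · right
    linarith
end

section
/- Let n ≥ 2 and let A be an antichain in Q(P_n) with all sets of size r₊ where r₊ ≥ (n+2)/3. Then the lower shadow ∂⁻A satisfies |∂⁻A| ≥ (r₊/(n - 2r₊ + 2))·|A| ≥ |A|. -/
/-- `A` is a `P_n`-independent set. -/
def PIndep (n : ℕ) (A : Finset ℕ) : Prop :=
  A ⊆ Finset.Icc 1 n ∧ ∀ i ∈ A, i + 1 ∉ A

/-- The lower shadow: all sets obtained by deleting one element of a member of `B`. -/
def lowerShadow (B : Finset (Finset ℕ)) : Finset (Finset ℕ) :=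
  B.biUnion (fun A => A.image (fun b => A.erase b))

open Finset

/-- An independent set in the path on `[1,n]` has at most `(n+1)/2` elements. -/
lemma pindep_double (n : ℕ) (B : Finset ℕ) (h : PIndep n B) : 2 * B.card ≤ n + 1 := by
  have hdisj : Disjoint B (B.image (· + 1)) := by
    rw [Finset.disjoint_right]
    intro x hx hxB
    obtain ⟨c, hc, rfl⟩ := Finset.mem_image.mp hx
    exact h.2 c hc hxB
  have hsub : B ∪ B.image (· + 1) ⊆ Finset.Icc 1 (n + 1) := by
    intro x hx
    rcases Finset.mem_union.mp hx with hx | hx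
    · have := h.1 hx; simp only [Finset.mem_Icc] at this ⊢; omega
    · obtain ⟨c, hc, rfl⟩ := Finset.mem_image.mp hx
      have := h.1 hc; simp only [Finset.mem_Icc] at this ⊢; omega
  have hcard := Finset.card_le_card hsub
  rw [Finset.card_union_of_disjoint hdisj,
    Finset.card_image_of_injective _ (add_left_injective 1)] at hcard
  rw [Nat.card_Icc] at hcard
  omega

/-- The set of positions extending `C` to a bigger independent set. -/
def extSet (n : ℕ) (C : Finset ℕ) : Finset ℕ :=
  (Finset.Icc 1 n).filter (fun x => x ∉ C ∧ x + 1 ∉ C ∧ ∀ c ∈ C, c + 1 ≠ x)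

lemma extSet_bound (n : ℕ) (C : Finset ℕ) (hC : PIndep n C)
    (hE : (extSet n C).Nonempty) : (extSet n C).card + 2 * C.card ≤ n := by
  classical
  set E := extSet n C with hEdef
  have hmemE : ∀ x ∈ E, x ∈ Finset.Icc 1 n ∧ x ∉ C ∧ x + 1 ∉ C ∧ ∀ c ∈ C, c + 1 ≠ x := by
    intro x hx
    simp only [hEdef, extSet, Finset.mem_filter] at hx
    tauto
  set e := E.max' hE with he
  have heE : e ∈ E := Finset.max'_mem E hE
  -- the four pieces
  have hd1 : Disjoint E C := by
    rw [Finset.disjoint_left]; intro x hx; exact (hmemE x hx).2.1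
  have hd2 : Disjoint (E ∪ C) (C.image (· + 1)) := by
    rw [Finset.disjoint_left]
    intro x hx hximg
    obtain ⟨c, hc, rfl⟩ := Finset.mem_image.mp hximg
    rcases Finset.mem_union.mp hx with hx | hx
    · exact (hmemE _ hx).2.2.2 c hc rfl
    · exact hC.2 c hc hx
  have hd3 : (e + 1) ∉ E ∪ C ∪ C.image (· + 1) := by
    intro hmem
    rcases Finset.mem_union.mp hmem with hmem | hmem
    · rcases Finset.mem_union.mp hmem with hmem | hmem
      · have := Finset.le_max' E _ hmem
        omega
      · exact (hmemE e heE).2.2.1 hmem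
    · obtain ⟨c, hc, hce⟩ := Finset.mem_image.mp hmem
      have : c = e := by omega
      subst this
      exact (hmemE e heE).2.1 hc
  have hsub : insert (e + 1) (E ∪ C ∪ C.image (· + 1)) ⊆ Finset.Icc 1 (n + 1) := by
    intro x hx
    rcases Finset.mem_insert.mp hx with rfl | hx
    · have := (hmemE e heE).1
      simp only [Finset.mem_Icc] at this ⊢; omega
    · rcases Finset.mem_union.mp hx with hx | hx
      · rcases Finset.mem_union.mp hx with hx | hx
        · have := (hmemE x hx).1
          simp only [Finset.mem_Icc] at this ⊢; omega
        · have := hC.1 hx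
          simp only [Finset.mem_Icc] at this ⊢; omega
      · obtain ⟨c, hc, rfl⟩ := Finset.mem_image.mp hx
        have := hC.1 hc
        simp only [Finset.mem_Icc] at this ⊢; omega
  have hcard := Finset.card_le_card hsub
  rw [Finset.card_insert_of_notMem hd3, Finset.card_union_of_disjoint hd2,
    Finset.card_union_of_disjoint hd1,
    Finset.card_image_of_injective _ (add_left_injective 1), Nat.card_Icc] at hcard
  omega

theorem lowerShadow_antichain_bound (n rp : ℕ) (hn : 2 ≤ n) (A : Finset (Finset ℕ))
    (hA : ∀ B ∈ A, PIndep n B ∧ B.card = rp)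
    (hanti : IsAntichain (· ⊆ ·) (A : Set (Finset ℕ)))
    (hrp : ((n : ℝ) + 2) / 3 ≤ (rp : ℝ)) :
    ((rp : ℝ) / ((n : ℝ) - 2 * rp + 2)) * (A.card : ℝ) ≤ ((lowerShadow A).card : ℝ) ∧
      (A.card : ℝ) ≤ ((rp : ℝ) / ((n : ℝ) - 2 * rp + 2)) * (A.card : ℝ) := by
  classical
  rcases Finset.eq_empty_or_nonempty A with rfl | ⟨B₀, hB₀⟩
  · simp [lowerShadow]
  -- basic bounds on rp
  have hrp2 : 2 ≤ rp := by
    by_contra h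
    push_neg at h
    have hn' : (2 : ℝ) ≤ (n : ℝ) := by exact_mod_cast hn
    interval_cases rp <;> (push_cast at hrp; linarith)
  have h2rp : 2 * rp ≤ n + 1 := by
    have := pindep_double n B₀ (hA B₀ hB₀).1
    rw [(hA B₀ hB₀).2] at this
    exact this
  set S := lowerShadow A with hS
  -- every member of the shadow is an erase of a member of A
  have hSmem : ∀ C ∈ S, ∃ B ∈ A, ∃ b ∈ B, C = B.erase b := by
    intro C hC
    simp only [hS, lowerShadow, Finset.mem_biUnion, Finset.mem_image] at hC
    obtain ⟨B, hB, b, hb, rfl⟩ := hC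
    exact ⟨B, hB, b, hb, rfl⟩
  -- children of B
  set ch : Finset ℕ → Finset (Finset ℕ) := fun B => B.image (fun b => B.erase b) with hch
  have hchcard : ∀ B ∈ A, (ch B).card = rp := by
    intro B hB
    rw [hch]
    rw [Finset.card_image_of_injOn, (hA B hB).2]
    intro a ha b hb hab
    simp only at hab
    by_contra hne
    have h1 : a ∈ B.erase b := Finset.mem_erase.mpr ⟨hne, Finset.mem_coe.mp ha⟩
    rw [← hab] at h1
    exact (Finset.mem_erase.mp h1).1 rfl
  have hchsub : ∀ B ∈ A, ch B ⊆ S := by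
    intro B hB C hC
    exact Finset.mem_biUnion.mpr ⟨B, hB, hC⟩
  -- double counting
  have hcount : rp * A.card = ∑ C ∈ S, (A.filter (fun B => C ∈ ch B)).card := by
    have : ∀ B ∈ A, (ch B).card = (S.filter (fun C => C ∈ ch B)).card := by
      intro B hB
      rw [Finset.filter_mem_eq_inter, Finset.inter_eq_right.mpr (hchsub B hB)]
    calc rp * A.card = ∑ B ∈ A, rp := by rw [Finset.sum_const, smul_eq_mul, mul_comm]
      _ = ∑ B ∈ A, (S.filter (fun C => C ∈ ch B)).card := by
          refine Finset.sum_congr rfl fun B hB => ?_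
          rw [← this B hB, hchcard B hB]
      _ = ∑ B ∈ A, ∑ C ∈ S, if C ∈ ch B then 1 else 0 := by
          refine Finset.sum_congr rfl fun B hB => ?_
          rw [Finset.card_filter]
      _ = ∑ C ∈ S, ∑ B ∈ A, if C ∈ ch B then 1 else 0 := Finset.sum_comm
      _ = ∑ C ∈ S, (A.filter (fun B => C ∈ ch B)).card := by
          refine Finset.sum_congr rfl fun C hC => ?_
          rw [Finset.card_filter]
  -- bound each fiber
  have hfiber : ∀ C ∈ S, (A.filter (fun B => C ∈ ch B)).card + 2 * rp ≤ n + 2 := by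
    intro C hC
    obtain ⟨B₁, hB₁, b₁, hb₁, rfl⟩ := hSmem C hC
    set C := B₁.erase b₁ with hCdef
    -- C is independent
    have hCind : PIndep n C := by
      constructor
      · exact fun x hx => (hA B₁ hB₁).1.1 (Finset.erase_subset _ _ hx)
      · intro i hi hmem
        exact (hA B₁ hB₁).1.2 i (Finset.erase_subset _ _ hi) (Finset.erase_subset _ _ hmem)
    have hCcard : C.card + 1 = rp := by
      have h1 : C.card = rp - 1 := by
        rw [hCdef, Finset.card_erase_of_mem hb₁, (hA B₁ hB₁).2]
      omega
    -- membership in extSet for any parent's extra element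
    have hextmem : ∀ B ∈ A, ∀ b ∈ B, C = B.erase b → b ∈ extSet n C := by
      intro B hB b hb hCB
      have hBi := (hA B hB).1
      have hCsub : C ⊆ B := by rw [hCB]; exact Finset.erase_subset _ _
      simp only [extSet, Finset.mem_filter]
      refine ⟨hBi.1 hb, ?_, ?_, ?_⟩
      · rw [hCB]; exact fun h => (Finset.mem_erase.mp h).1 rfl
      · exact fun h => hBi.2 b hb (hCsub h)
      · intro c hc hcb
        exact hBi.2 c (hCsub hc) (by rw [hcb]; exact hb)
    have hEne : (extSet n C).Nonempty := ⟨b₁, hextmem B₁ hB₁ b₁ hb₁ rfl⟩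
    have hEbound := extSet_bound n C hCind hEne
    -- injection from the fiber into extSet
    have hinj : (A.filter (fun B => C ∈ ch B)).card ≤ (extSet n C).card := by
      apply Finset.card_le_card_of_injOn (fun B => ∑ x ∈ B \ C, x)
      · intro B hB
        simp only [Finset.mem_coe, Finset.mem_filter, hch, Finset.mem_image] at hB
        obtain ⟨hBA, b, hb, hCB⟩ := hB
        have hdiff : B \ C = {b} := by
          rw [← hCB]
          exact Finset.sdiff_erase_self hb
        simp only [hdiff, Finset.sum_singleton]
        exact hextmem B hBA b hb hCB.symm
      · intro B hB B' hB' heq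
        simp only [Finset.coe_filter, Set.mem_setOf_eq, hch, Finset.mem_image] at hB hB'
        obtain ⟨hBA, b, hb, hCB⟩ := hB
        obtain ⟨hBA', b', hb', hCB'⟩ := hB'
        have hdiff : B \ C = {b} := by rw [← hCB]; exact Finset.sdiff_erase_self hb
        have hdiff' : B' \ C = {b'} := by rw [← hCB']; exact Finset.sdiff_erase_self hb'
        simp only [hdiff, hdiff', Finset.sum_singleton] at heq
        subst heq
        rw [← Finset.insert_erase hb, ← Finset.insert_erase hb', hCB, hCB']
    omega
  -- the key natural-number inequality
  have hkey : rp * A.card + 2 * rp * S.card ≤ (n + 2) * S.card := by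
    calc rp * A.card + 2 * rp * S.card
        = ∑ C ∈ S, ((A.filter (fun B => C ∈ ch B)).card + 2 * rp) := by
          rw [Finset.sum_add_distrib, ← hcount, Finset.sum_const, smul_eq_mul]
          ring
      _ ≤ ∑ C ∈ S, (n + 2) := Finset.sum_le_sum hfiber
      _ = (n + 2) * S.card := by rw [Finset.sum_const, smul_eq_mul, mul_comm]
  -- move to the reals
  have hd : (1 : ℝ) ≤ (n : ℝ) - 2 * rp + 2 := by
    have : (2 * rp : ℝ) ≤ (n : ℝ) + 1 := by exact_mod_cast h2rp
    linarith
  have hd0 : (0 : ℝ) < (n : ℝ) - 2 * rp + 2 := by linarith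
  have hkeyR : (rp : ℝ) * A.card + 2 * rp * S.card ≤ ((n : ℝ) + 2) * S.card := by
    exact_mod_cast hkey
  have hmain : (rp : ℝ) / ((n : ℝ) - 2 * rp + 2) * A.card ≤ (S.card : ℝ) := by
    rw [div_mul_eq_mul_div, div_le_iff₀ hd0]
    nlinarith [hkeyR]
  refine ⟨hmain, ?_⟩
  have h1le : (1 : ℝ) ≤ (rp : ℝ) / ((n : ℝ) - 2 * rp + 2) := by
    rw [le_div_iff₀ hd0]
    linarith
  nlinarith [h1le, Nat.cast_nonneg (α := ℝ) A.card]
end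

section
/- Let n ≥ 2 and let A be a family of P_n-independent sets all of size r₋ where r₋ ≤ (n-1)/4. Then the upper shadow ∂⁺A satisfies |∂⁺A| ≥ ((n - 3r₋)/(r₋ + 1))·|A| ≥ |A|. -/
instance (n : ℕ) (A : Finset ℕ) : Decidable (PIndep n A) := by
  unfold PIndep; infer_instance

/-- The upper shadow: all `P_n`-independent sets obtained by adding one new
element to a member of `A`. -/
def upperShadow (n : ℕ) (A : Finset (Finset ℕ)) : Finset (Finset ℕ) :=
  A.biUnion (fun C =>
    (((Finset.Icc 1 n) \ C).filter (fun b => PIndep n (insert b C))).image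
      (fun b => insert b C))

open Finset

lemma good_count (n rm : ℕ) (B : Finset ℕ) (hB : PIndep n B) (hcard : B.card = rm) :
    n - 3 * rm ≤
      ((((Finset.Icc 1 n) \ B).filter (fun b => PIndep n (insert b B)))).card := by
  classical
  set T : Finset ℕ := B.biUnion (fun a => {a - 1, a, a + 1}) with hT
  have hTcard : T.card ≤ 3 * rm := by
    refine le_trans (Finset.card_biUnion_le) ?_
    calc ∑ a ∈ B, ({a - 1, a, a + 1} : Finset ℕ).card
        ≤ ∑ _a ∈ B, 3 := by
          refine Finset.sum_le_sum fun a _ => ?_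
          refine le_trans (Finset.card_insert_le _ _) ?_
          exact Nat.succ_le_succ (Finset.card_insert_le _ _)
      _ = 3 * rm := by rw [Finset.sum_const, hcard, smul_eq_mul, Nat.mul_comm]
  have hsub : (Finset.Icc 1 n) \ T ⊆
      (((Finset.Icc 1 n) \ B).filter (fun b => PIndep n (insert b B))) := by
    intro b hb
    rw [Finset.mem_sdiff] at hb
    obtain ⟨hb1, hb2⟩ := hb
    have hbT : ∀ a ∈ B, b ≠ a - 1 ∧ b ≠ a ∧ b ≠ a + 1 := by
      intro a ha
      constructor
      · intro h; exact hb2 (Finset.mem_biUnion.2 ⟨a, ha, by simp [h]⟩)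
      constructor
      · intro h; exact hb2 (Finset.mem_biUnion.2 ⟨a, ha, by simp [h]⟩)
      · intro h; exact hb2 (Finset.mem_biUnion.2 ⟨a, ha, by simp [h]⟩)
    have hbB : b ∉ B := fun h => (hbT b h).2.1 rfl
    rw [Finset.mem_filter, Finset.mem_sdiff]
    refine ⟨⟨hb1, hbB⟩, ?_, ?_⟩
    · intro i hi
      rcases Finset.mem_insert.1 hi with rfl | hi
      · exact hb1
      · exact hB.1 hi
    · intro i hi
      rcases Finset.mem_insert.1 hi with rfl | hi
      · -- i = b : show b + 1 ∉ insert b B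
        intro h
        rcases Finset.mem_insert.1 h with h | h
        · omega
        · exact (hbT _ h).1 (by omega)
      · intro h
        rcases Finset.mem_insert.1 h with h | h
        · exact (hbT i hi).2.2 h.symm
        · exact hB.2 i hi h
  calc n - 3 * rm ≤ (Finset.Icc 1 n).card - T.card := by
        rw [Nat.card_Icc]; omega
    _ ≤ ((Finset.Icc 1 n) \ T).card := Finset.le_card_sdiff _ _
    _ ≤ _ := Finset.card_le_card hsub

theorem upperShadow_card_bound (n rm : ℕ) (hn : 2 ≤ n) (A : Finset (Finset ℕ))
    (hA : ∀ B ∈ A, PIndep n B ∧ B.card = rm)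
    (hrm : (rm : ℝ) ≤ ((n : ℝ) - 1) / 4) :
    (((n : ℝ) - 3 * rm) / ((rm : ℝ) + 1)) * (A.card : ℝ) ≤ ((upperShadow n A).card : ℝ) ∧
      (A.card : ℝ) ≤ (((n : ℝ) - 3 * rm) / ((rm : ℝ) + 1)) * (A.card : ℝ) := by
  classical
  have hrm' : 4 * rm + 1 ≤ n := by
    have h1 : ((4 * rm + 1 : ℕ) : ℝ) ≤ (n : ℝ) := by push_cast; linarith
    exact_mod_cast h1
  -- double counting
  have hkey : A.card * (n - 3 * rm) ≤ (upperShadow n A).card * (rm + 1) := by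
    refine Finset.card_mul_le_card_mul (fun B C => B ⊆ C) ?_ ?_
    · intro B hB
      obtain ⟨hBi, hBc⟩ := hA B hB
      refine le_trans (good_count n rm B hBi hBc) ?_
      refine Finset.card_le_card_of_injOn (fun b => insert b B) ?_ ?_
      · intro b hb
        rw [Finset.mem_coe, Finset.mem_filter, Finset.mem_sdiff] at hb
        rw [Finset.mem_coe, Finset.bipartiteAbove, Finset.mem_filter]
        refine ⟨?_, Finset.subset_insert _ _⟩
        exact Finset.mem_biUnion.2 ⟨B, hB, Finset.mem_image.2 ⟨b, by
          rw [Finset.mem_filter, Finset.mem_sdiff]; exact ⟨hb.1, hb.2⟩, rfl⟩⟩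
      · intro b hb b' hb' h
        rw [Finset.mem_coe, Finset.mem_filter, Finset.mem_sdiff] at hb hb'
        have : b ∈ insert b' B := by simp only at h; rw [← h]; exact Finset.mem_insert_self b B
        rcases Finset.mem_insert.1 this with h' | h'
        · exact h'
        · exact absurd h' hb.1.2
    · intro C hC
      have hCcard : C.card = rm + 1 := by
        rw [upperShadow, Finset.mem_biUnion] at hC
        obtain ⟨B, hB, hCB⟩ := hC
        rw [Finset.mem_image] at hCB
        obtain ⟨b, hb, rfl⟩ := hCB
        rw [Finset.mem_filter, Finset.mem_sdiff] at hb
        rw [Finset.card_insert_of_notMem hb.1.2, (hA B hB).2]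
      calc (A.filter (fun B => B ⊆ C)).card
          ≤ (C.powersetCard rm).card := by
            refine Finset.card_le_card ?_
            intro B hB
            rw [Finset.mem_filter] at hB
            exact Finset.mem_powersetCard.2 ⟨hB.2, (hA B hB.1).2⟩
        _ = (rm + 1).choose rm := by rw [Finset.card_powersetCard, hCcard]
        _ = rm + 1 := Nat.choose_succ_self_right rm
  have h3rm : 3 * rm ≤ n := by omega
  have hkeyR : ((n : ℝ) - 3 * rm) * A.card ≤ (upperShadow n A).card * (rm + 1) := by
    have := hkey
    have h1 : ((A.card * (n - 3 * rm) : ℕ) : ℝ) ≤ (((upperShadow n A).card * (rm + 1) : ℕ) : ℝ) := by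
      exact_mod_cast this
    push_cast [h3rm] at h1
    linarith
  have hpos : (0 : ℝ) < (rm : ℝ) + 1 := by positivity
  constructor
  · rw [div_mul_eq_mul_div, div_le_iff₀ hpos]
    linarith
  · have h1 : (1 : ℝ) ≤ ((n : ℝ) - 3 * rm) / ((rm : ℝ) + 1) := by
      rw [le_div_iff₀ hpos]
      have : ((4 * rm + 1 : ℕ) : ℝ) ≤ (n : ℝ) := by exact_mod_cast hrm'
      push_cast at this
      linarith
    nlinarith [Nat.cast_nonneg (α := ℝ) A.card]
end

section
/- For every n ≥ 2 and every antichain A in Q(P_n), there exists an antichain A' in Q(P_n) with |A'| ≥ |A| such that every set in A' has size r satisfying (n-1)/4 < r < (n+2)/3. -/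
namespace AC

open Finset

variable {n : ℕ}

lemma pIndep_subset {B C : Finset ℕ} (h : PIndep n B) (hCB : C ⊆ B) : PIndep n C :=
  ⟨hCB.trans h.1, fun i hi hc => h.2 i (hCB hi) (hCB hc)⟩

/-- positions that can be added to `C` keeping it independent. -/
def avail (n : ℕ) (C : Finset ℕ) : Finset ℕ :=
  (Finset.Icc 1 n).filter fun x => x ∉ C ∧ x + 1 ∉ C ∧ ∀ c ∈ C, c + 1 ≠ x

lemma mem_avail {C : Finset ℕ} {x : ℕ} :
    x ∈ avail n C ↔ x ∈ Finset.Icc 1 n ∧ x ∉ C ∧ x + 1 ∉ C ∧ ∀ c ∈ C, c + 1 ≠ x := by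
  simp [avail]

lemma pIndep_insert {C : Finset ℕ} (hC : PIndep n C) {x : ℕ} (hx : x ∈ avail n C) :
    PIndep n (insert x C) := by
  rw [mem_avail] at hx
  obtain ⟨hx1, hx2, hx3, hx4⟩ := hx
  constructor
  · intro y hy
    rcases Finset.mem_insert.1 hy with rfl | hy
    · exact hx1
    · exact hC.1 hy
  · intro i hi hmem
    rcases Finset.mem_insert.1 hi with rfl | hi
    · rcases Finset.mem_insert.1 hmem with h | h
      · omega
      · exact hx3 h
    · rcases Finset.mem_insert.1 hmem with h | h
      · exact hx4 i hi h
      · exact hC.2 i hi h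

lemma mem_avail_of_insert {C : Finset ℕ} {x : ℕ} (h : PIndep n (insert x C)) (hx : x ∉ C) :
    x ∈ avail n C := by
  rw [mem_avail]
  refine ⟨h.1 (Finset.mem_insert_self x C), hx, ?_, ?_⟩
  · intro hc
    exact h.2 x (Finset.mem_insert_self x C) (Finset.mem_insert_of_mem hc)
  · intro c hc he
    exact h.2 c (Finset.mem_insert_of_mem hc) (he ▸ Finset.mem_insert_self x C)

/-- Key upper bound: if something can be added, then `|avail| + 2|C| ≤ n`. -/
lemma avail_card_le {C : Finset ℕ} (hC : PIndep n C) (hne : (avail n C).Nonempty) :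
    (avail n C).card + 2 * C.card ≤ n := by
  obtain ⟨x, hx⟩ := hne
  rw [mem_avail] at hx
  obtain ⟨hx1, hx2, hx3, hx4⟩ := hx
  rw [Finset.mem_Icc] at hx1
  classical
  set L : Finset ℕ := C.filter (· < x) with hL
  set R : Finset ℕ := C.filter (x < ·) with hR
  set S1 : Finset ℕ := L.image (· + 1) with hS1
  set S2 : Finset ℕ := R.image (· - 1) with hS2
  -- facts about members
  have hmemL : ∀ c ∈ L, c ∈ C ∧ c < x := by intro c hc; simpa [hL] using hc
  have hmemR : ∀ c ∈ R, c ∈ C ∧ x < c := by intro c hc; simpa [hR] using hc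
  have hCrange : ∀ c ∈ C, 1 ≤ c ∧ c ≤ n := by
    intro c hc; have := hC.1 hc; rwa [Finset.mem_Icc] at this
  have hS1mem : ∀ y ∈ S1, ∃ c ∈ C, y = c + 1 ∧ c + 1 < x := by
    intro y hy
    rw [hS1, Finset.mem_image] at hy
    obtain ⟨c, hc, rfl⟩ := hy
    obtain ⟨hcC, hcx⟩ := hmemL c hc
    have := hx4 c hcC
    exact ⟨c, hcC, rfl, by omega⟩
  have hS2mem : ∀ y ∈ S2, ∃ c ∈ C, y = c - 1 ∧ x + 2 ≤ c := by
    intro y hy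
    rw [hS2, Finset.mem_image] at hy
    obtain ⟨c, hc, rfl⟩ := hy
    obtain ⟨hcC, hcx⟩ := hmemR c hc
    have hcne : c ≠ x + 1 := fun h => hx3 (h ▸ hcC)
    exact ⟨c, hcC, rfl, by omega⟩
  -- cardinalities
  have hcardL : S1.card = L.card := Finset.card_image_of_injective _ (fun a b => by omega)
  have hcardR : S2.card = R.card := by
    rw [hS2]
    apply Finset.card_image_of_injOn
    intro a ha b hb hab
    obtain ⟨haC, hax⟩ := hmemR a ha
    obtain ⟨hbC, hbx⟩ := hmemR b hb
    have hab' : a - 1 = b - 1 := hab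
    omega
  have hcardLR : L.card + R.card = C.card := by
    rw [hL, hR]
    have : C.filter (x < ·) = C.filter (fun c => ¬ c < x) := by
      apply Finset.filter_congr
      intro c hc
      have : c ≠ x := fun h => hx2 (h ▸ hc)
      omega
    rw [this, Finset.card_filter_add_card_filter_not]
  -- the union
  have hsub : avail n C ∪ (C ∪ (S1 ∪ S2)) ⊆ Finset.Icc 1 n := by
    intro y hy
    rw [Finset.mem_Icc]
    rcases Finset.mem_union.1 hy with hy | hy
    · rw [mem_avail, Finset.mem_Icc] at hy; omega
    rcases Finset.mem_union.1 hy with hy | hy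
    · exact hCrange y hy
    rcases Finset.mem_union.1 hy with hy | hy
    · obtain ⟨c, hc, rfl, h⟩ := hS1mem y hy; omega
    · obtain ⟨c, hc, rfl, h⟩ := hS2mem y hy
      have := hCrange c hc; omega
  have d1 : Disjoint S1 S2 := by
    rw [Finset.disjoint_left]
    intro y hy1 hy2
    obtain ⟨c, hc, he1, h⟩ := hS1mem y hy1
    obtain ⟨c', hc', he2, h'⟩ := hS2mem y hy2
    omega
  have d2 : Disjoint C (S1 ∪ S2) := by
    rw [Finset.disjoint_left]
    intro y hyC hy
    rcases Finset.mem_union.1 hy with hy | hy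
    · obtain ⟨c, hc, he, h⟩ := hS1mem y hy
      rw [he] at hyC
      exact hC.2 c hc hyC
    · obtain ⟨c, hc, he, h⟩ := hS2mem y hy
      have h2 : y + 1 = c := by omega
      rw [← h2] at hc
      exact hC.2 y hyC hc
  have d3 : Disjoint (avail n C) (C ∪ (S1 ∪ S2)) := by
    rw [Finset.disjoint_left]
    intro y hyA hy
    rw [mem_avail] at hyA
    obtain ⟨_, hy2, hy3, hy4⟩ := hyA
    rcases Finset.mem_union.1 hy with hy | hy
    · exact hy2 hy
    rcases Finset.mem_union.1 hy with hy | hy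
    · obtain ⟨c, hc, he, h⟩ := hS1mem y hy
      exact hy4 c hc he.symm
    · obtain ⟨c, hc, he, h⟩ := hS2mem y hy
      have h2 : y + 1 = c := by omega
      rw [← h2] at hc
      exact hy3 hc
  have hcard := Finset.card_le_card hsub
  rw [Finset.card_union_of_disjoint d3, Finset.card_union_of_disjoint d2,
    Finset.card_union_of_disjoint d1, Nat.card_Icc] at hcard
  omega

/-- Lower bound: `n ≤ |avail| + 3|C|`. -/
lemma le_avail_card {C : Finset ℕ} (hC : PIndep n C) :
    n ≤ (avail n C).card + 3 * C.card := by
  classical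
  have hsub : Finset.Icc 1 n ⊆ avail n C ∪ (C ∪ (C.image (· + 1) ∪ C.image (· - 1))) := by
    intro y hy
    by_cases h1 : y ∈ C
    · exact Finset.mem_union_right _ (Finset.mem_union_left _ h1)
    by_cases h2 : y + 1 ∈ C
    · refine Finset.mem_union_right _ (Finset.mem_union_right _ (Finset.mem_union_right _ ?_))
      exact Finset.mem_image.2 ⟨y + 1, h2, by omega⟩
    by_cases h3 : ∀ c ∈ C, c + 1 ≠ y
    · exact Finset.mem_union_left _ (mem_avail.2 ⟨hy, h1, h2, h3⟩)
    · push_neg at h3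
      obtain ⟨c, hc, he⟩ := h3
      refine Finset.mem_union_right _ (Finset.mem_union_right _ (Finset.mem_union_left _ ?_))
      exact Finset.mem_image.2 ⟨c, hc, he⟩
  have := Finset.card_le_card hsub
  have h1 := Finset.card_union_le (avail n C) (C ∪ (C.image (· + 1) ∪ C.image (· - 1)))
  have h2 := Finset.card_union_le C (C.image (· + 1) ∪ C.image (· - 1))
  have h3 := Finset.card_union_le (C.image (· + 1)) (C.image (· - 1))
  have h4 := Finset.card_image_le (s := C) (f := (· + 1))
  have h5 := Finset.card_image_le (s := C) (f := (· - 1))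
  rw [Nat.card_Icc] at this
  omega

lemma stepDown (n s : ℕ) (hs : n + 2 ≤ 3 * s) (A : Finset (Finset ℕ))
    (hA : ∀ B ∈ A, PIndep n B) (hanti : IsAntichain (· ⊆ ·) (A : Set (Finset ℕ)))
    (hmax : ∀ B ∈ A, B.card ≤ s) :
    ∃ A' : Finset (Finset ℕ), (∀ B ∈ A', PIndep n B) ∧
      IsAntichain (· ⊆ ·) (A' : Set (Finset ℕ)) ∧ A.card ≤ A'.card ∧
      ∀ B ∈ A', B.card ≤ s - 1 := by
  classical
  have hs1 : 1 ≤ s := by omega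
  set T : Finset (Finset ℕ) := A.filter (fun B => B.card = s) with hT
  have hBT : ∀ B : {B // B ∈ T}, B.1 ∈ A ∧ B.1.card = s := fun B =>
    Finset.mem_filter.1 B.2
  set t : {B // B ∈ T} → Finset (Finset ℕ) := fun B => B.1.image (fun b => B.1.erase b) with ht
  have htmem : ∀ (B : {B // B ∈ T}) (C : Finset ℕ), C ∈ t B →
      ∃ b ∈ B.1, C = B.1.erase b := by
    intro B C hC
    rw [ht, Finset.mem_image] at hC
    obtain ⟨b, hb, he⟩ := hC
    exact ⟨b, hb, he.symm⟩
  -- basic consequences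
  have hkey : ∀ (B : {B // B ∈ T}) (C : Finset ℕ), C ∈ t B →
      C ⊆ B.1 ∧ C ≠ B.1 ∧ C.card + 1 = s ∧ PIndep n C ∧
        ∀ x ∈ B.1 \ C, B.1 = insert x C := by
    intro B C hC
    obtain ⟨b, hb, he⟩ := htmem B C hC
    have hsub : C ⊆ B.1 := he ▸ Finset.erase_subset b B.1
    have hbne : b ∉ C := he ▸ Finset.notMem_erase b B.1
    have hne : C ≠ B.1 := fun h => hbne (h ▸ hb)
    have hcard : C.card + 1 = s := by
      rw [he, Finset.card_erase_of_mem hb, (hBT B).2]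
      omega
    have hdiff : B.1 \ C = {b} := by
      rw [he]
      ext x
      simp only [Finset.mem_sdiff, Finset.mem_erase, Finset.mem_singleton]
      constructor
      · rintro ⟨hx, h⟩
        by_contra hxb
        exact h ⟨hxb, hx⟩
      · rintro rfl
        exact ⟨hb, fun h => h.1 rfl⟩
    refine ⟨hsub, hne, hcard, pIndep_subset (hA B.1 (hBT B).1) hsub, ?_⟩
    intro x hx
    rw [hdiff, Finset.mem_singleton] at hx
    subst hx
    rw [he, Finset.insert_erase hb]
  -- Hall's condition
  have hall : ∀ s' : Finset {B // B ∈ T}, s'.card ≤ (s'.biUnion t).card := by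
    intro s'
    set t' := s'.biUnion t with ht'
    have key : s'.card * s ≤ t'.card * s := by
      apply Finset.card_mul_le_card_mul (fun B C => C ∈ t B)
      · intro B hB
        have hsub : t B ⊆ t'.bipartiteAbove (fun B C => C ∈ t B) B := by
          intro C hC
          rw [Finset.mem_bipartiteAbove]
          exact ⟨Finset.mem_biUnion.2 ⟨B, hB, hC⟩, hC⟩
        have hcard : (t B).card = s := by
          rw [ht]
          rw [Finset.card_image_of_injOn, (hBT B).2]
          intro a ha b hb hab
          have hab' : B.1.erase a = B.1.erase b := hab
          by_contra hne
          have hmem : b ∈ B.1.erase a := Finset.mem_erase.2 ⟨fun h => hne h.symm, hb⟩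
          rw [hab'] at hmem
          exact absurd hmem (Finset.notMem_erase b B.1)
        calc s = (t B).card := hcard.symm
          _ ≤ _ := Finset.card_le_card hsub
      · intro C hC
        set sB := s'.bipartiteBelow (fun B C => C ∈ t B) C with hsB
        by_cases hne : sB.Nonempty
        · obtain ⟨B₀, hB₀⟩ := hne
          rw [hsB, Finset.mem_bipartiteBelow] at hB₀
          obtain ⟨hC1, hC2, hC3, hC4, _⟩ := hkey B₀ C hB₀.2
          set φ : {B // B ∈ T} → ℕ := fun B =>
            if h : (B.1 \ C).Nonempty then (B.1 \ C).min' h else 0 with hφ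
          have hφval : ∀ B ∈ sB, B.1 = insert (φ B) C ∧ φ B ∈ avail n C := by
            intro B hB
            rw [hsB, Finset.mem_bipartiteBelow] at hB
            obtain ⟨hs1', hs2', hs3', hs4', hs5'⟩ := hkey B C hB.2
            obtain ⟨b, hb, he⟩ := htmem B C hB.2
            have hnon : (B.1 \ C).Nonempty :=
              ⟨b, Finset.mem_sdiff.2 ⟨hb, he ▸ Finset.notMem_erase b B.1⟩⟩
            have hφB : φ B = (B.1 \ C).min' hnon := by
              rw [hφ]; simp [hnon]
            have hmem0 : φ B ∈ B.1 \ C := by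
              rw [hφB]; exact Finset.min'_mem _ hnon
            have hmem := Finset.mem_sdiff.1 hmem0
            have hins : B.1 = insert (φ B) C := hs5' _ hmem0
            refine ⟨hins, mem_avail_of_insert (hins ▸ hA B.1 (hBT B).1) hmem.2⟩
          have hinj : Set.InjOn φ sB := by
            intro B hB B' hB' he
            have h1 := (hφval B hB).1
            have h2 := (hφval B' hB').1
            exact Subtype.ext (by rw [h1, h2, he])
          have hmaps : ∀ B ∈ sB, φ B ∈ avail n C := fun B hB => (hφval B hB).2
          have hle : sB.card ≤ (avail n C).card :=
            Finset.card_le_card_of_injOn φ hmaps hinj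
          have hnon : (avail n C).Nonempty := ⟨φ B₀, hmaps B₀ (by
            rw [hsB, Finset.mem_bipartiteBelow]; exact hB₀)⟩
          have := avail_card_le hC4 hnon
          omega
        · have h0 : sB = ∅ := Finset.not_nonempty_iff_eq_empty.1 hne
          rw [h0]
          simp
    exact Nat.le_of_mul_le_mul_right key (by omega)
  obtain ⟨f, hfinj, hft⟩ := (Finset.all_card_le_biUnion_card_iff_exists_injective t).1 hall
  set F : Finset (Finset ℕ) := T.attach.image f with hF
  set A₀ : Finset (Finset ℕ) := A.filter (fun B => ¬ B.card = s) with hA₀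
  have hA₀mem : ∀ B ∈ A₀, B ∈ A ∧ B.card ≤ s - 1 := by
    intro B hB
    rw [hA₀, Finset.mem_filter] at hB
    have := hmax B hB.1
    exact ⟨hB.1, by omega⟩
  have hFmem : ∀ C ∈ F, ∃ B ∈ A, B.card = s ∧ C ⊆ B ∧ C ≠ B ∧ C.card + 1 = s ∧ PIndep n C := by
    intro C hC
    rw [hF, Finset.mem_image] at hC
    obtain ⟨B, hB, rfl⟩ := hC
    obtain ⟨h1, h2, h3, h4, _⟩ := hkey B (f B) (hft B)
    exact ⟨B.1, (hBT B).1, (hBT B).2, h1, h2, h3, h4⟩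
  have hdisj : Disjoint A₀ F := by
    rw [Finset.disjoint_left]
    intro C hC hCF
    obtain ⟨B, hB, _, hsub, hne, _, _⟩ := hFmem C hCF
    exact hanti ((hA₀mem C hC).1) hB hne hsub
  refine ⟨A₀ ∪ F, ?_, ?_, ?_, ?_⟩
  · intro B hB
    rcases Finset.mem_union.1 hB with hB | hB
    · exact hA B (hA₀mem B hB).1
    · obtain ⟨_, _, _, _, _, _, h⟩ := hFmem B hB
      exact h
  · intro X hX Y hY hne hsub
    rw [Finset.mem_coe, Finset.mem_union] at hX hY
    rcases hX with hX | hX <;> rcases hY with hY | hY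
    · exact hanti ((hA₀mem X hX).1) ((hA₀mem Y hY).1) hne hsub
    · obtain ⟨B, hB, _, hYB, hYne, _, _⟩ := hFmem Y hY
      have hXB : X ⊆ B := hsub.trans hYB
      have hXneB : X ≠ B := by
        rintro rfl
        exact hYne (Finset.Subset.antisymm hYB hsub)
      exact hanti ((hA₀mem X hX).1) hB hXneB hXB
    · obtain ⟨_, _, _, _, _, hXc, _⟩ := hFmem X hX
      have hYc := (hA₀mem Y hY).2
      have : X = Y := Finset.eq_of_subset_of_card_le hsub (by omega)
      exact hne this
    · obtain ⟨_, _, _, _, _, hXc, _⟩ := hFmem X hX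
      obtain ⟨_, _, _, _, _, hYc, _⟩ := hFmem Y hY
      have : X = Y := Finset.eq_of_subset_of_card_le hsub (by omega)
      exact hne this
  · have hcardF : F.card = T.card := by
      rw [hF, Finset.card_image_of_injective _ hfinj, Finset.card_attach]
    have hsplit : T.card + A₀.card = A.card := by
      rw [hT, hA₀]
      exact Finset.card_filter_add_card_filter_not _
    rw [Finset.card_union_of_disjoint hdisj]
    omega
  · intro B hB
    rcases Finset.mem_union.1 hB with hB | hB
    · exact (hA₀mem B hB).2
    · obtain ⟨_, _, _, _, _, hc, _⟩ := hFmem B hB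
      omega

lemma stepUp (n r : ℕ) (hn : 2 ≤ n) (hr : 4 * r + 1 ≤ n) (A : Finset (Finset ℕ))
    (hA : ∀ B ∈ A, PIndep n B) (hanti : IsAntichain (· ⊆ ·) (A : Set (Finset ℕ)))
    (hmin : ∀ B ∈ A, r ≤ B.card) (hub : ∀ B ∈ A, 3 * B.card ≤ n + 1) :
    ∃ A' : Finset (Finset ℕ), (∀ B ∈ A', PIndep n B) ∧
      IsAntichain (· ⊆ ·) (A' : Set (Finset ℕ)) ∧ A.card ≤ A'.card ∧
      (∀ B ∈ A', r + 1 ≤ B.card) ∧ (∀ B ∈ A', 3 * B.card ≤ n + 1) := by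
  classical
  set T : Finset (Finset ℕ) := A.filter (fun B => B.card = r) with hT
  have hBT : ∀ B : {B // B ∈ T}, B.1 ∈ A ∧ B.1.card = r := fun B =>
    Finset.mem_filter.1 B.2
  set t : {B // B ∈ T} → Finset (Finset ℕ) :=
    fun B => (avail n B.1).image (fun x => insert x B.1) with ht
  have htmem : ∀ (B : {B // B ∈ T}) (C : Finset ℕ), C ∈ t B →
      ∃ x ∈ avail n B.1, C = insert x B.1 := by
    intro B C hC
    rw [ht, Finset.mem_image] at hC
    obtain ⟨x, hx, he⟩ := hC
    exact ⟨x, hx, he.symm⟩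
  have hkey : ∀ (B : {B // B ∈ T}) (C : Finset ℕ), C ∈ t B →
      B.1 ⊆ C ∧ C ≠ B.1 ∧ C.card = r + 1 ∧ PIndep n C ∧
        ∀ x ∈ C \ B.1, B.1 = C.erase x := by
    intro B C hC
    obtain ⟨x, hx, he⟩ := htmem B C hC
    have hxB : x ∉ B.1 := (mem_avail.1 hx).2.1
    have hsub : B.1 ⊆ C := he ▸ Finset.subset_insert x B.1
    have hne : C ≠ B.1 := by
      rw [he]
      intro h
      exact hxB (h ▸ Finset.mem_insert_self x B.1)
    have hcard : C.card = r + 1 := by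
      rw [he, Finset.card_insert_of_notMem hxB, (hBT B).2]
    have hdiff : C \ B.1 = {x} := by
      rw [he]
      ext y
      simp only [Finset.mem_sdiff, Finset.mem_insert, Finset.mem_singleton]
      constructor
      · rintro ⟨h1 | h1, h2⟩
        · exact h1
        · exact absurd h1 h2
      · rintro rfl
        exact ⟨Or.inl rfl, hxB⟩
    refine ⟨hsub, hne, hcard, he ▸ pIndep_insert (hA B.1 (hBT B).1) hx, ?_⟩
    intro y hy
    rw [hdiff, Finset.mem_singleton] at hy
    subst hy
    rw [he, Finset.erase_insert hxB]
  have hall : ∀ s' : Finset {B // B ∈ T}, s'.card ≤ (s'.biUnion t).card := by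
    intro s'
    set t' := s'.biUnion t with ht'
    have key : s'.card * (n - 3 * r) ≤ t'.card * (r + 1) := by
      apply Finset.card_mul_le_card_mul (fun B C => C ∈ t B)
      · intro B hB
        have hsub : t B ⊆ t'.bipartiteAbove (fun B C => C ∈ t B) B := by
          intro C hC
          rw [Finset.mem_bipartiteAbove]
          exact ⟨Finset.mem_biUnion.2 ⟨B, hB, hC⟩, hC⟩
        have hcard : (t B).card = (avail n B.1).card := by
          rw [ht]
          apply Finset.card_image_of_injOn
          intro a ha b hb hab
          have hab' : insert a B.1 = insert b B.1 := hab
          have haB : a ∉ B.1 := (mem_avail.1 ha).2.1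
          have ha2 : a ∈ insert b B.1 := hab' ▸ Finset.mem_insert_self a B.1
          rcases Finset.mem_insert.1 ha2 with h | h
          · exact h
          · exact absurd h haB
        have hge := le_avail_card (hA B.1 (hBT B).1)
        rw [(hBT B).2] at hge
        calc n - 3 * r ≤ (avail n B.1).card := by omega
          _ = (t B).card := hcard.symm
          _ ≤ _ := Finset.card_le_card hsub
      · intro C hC
        rw [ht'] at hC
        obtain ⟨B₁, hB₁, hCB₁⟩ := Finset.mem_biUnion.1 hC
        have hCcard : C.card = r + 1 := (hkey B₁ C hCB₁).2.2.1
        set sB := s'.bipartiteBelow (fun B C => C ∈ t B) C with hsB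
        set φ : {B // B ∈ T} → ℕ := fun B =>
          if h : (C \ B.1).Nonempty then (C \ B.1).min' h else 0 with hφ
        have hφval : ∀ B ∈ sB, φ B ∈ C ∧ B.1 = C.erase (φ B) := by
          intro B hB
          rw [hsB, Finset.mem_bipartiteBelow] at hB
          obtain ⟨x, hx, he⟩ := htmem B C hB.2
          have hxB : x ∉ B.1 := (mem_avail.1 hx).2.1
          have hnon : (C \ B.1).Nonempty :=
            ⟨x, Finset.mem_sdiff.2 ⟨he ▸ Finset.mem_insert_self x B.1, hxB⟩⟩
          have hφB : φ B = (C \ B.1).min' hnon := by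
            rw [hφ]; simp [hnon]
          have hmem0 : φ B ∈ C \ B.1 := by
            rw [hφB]; exact Finset.min'_mem _ hnon
          have hmem := Finset.mem_sdiff.1 hmem0
          exact ⟨hmem.1, (hkey B C hB.2).2.2.2.2 _ hmem0⟩
        have hinj : Set.InjOn φ sB := by
          intro B hB B' hB' he
          have h1 := (hφval B hB).2
          have h2 := (hφval B' hB').2
          exact Subtype.ext (by rw [h1, h2, he])
        have hle : sB.card ≤ C.card :=
          Finset.card_le_card_of_injOn φ (fun B hB => (hφval B hB).1) hinj
        omega
    have h1 : r + 1 ≤ n - 3 * r := by omega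
    have h2 : s'.card * (r + 1) ≤ t'.card * (r + 1) :=
      le_trans (Nat.mul_le_mul_left _ h1) key
    exact Nat.le_of_mul_le_mul_right h2 (by omega)
  obtain ⟨f, hfinj, hft⟩ := (Finset.all_card_le_biUnion_card_iff_exists_injective t).1 hall
  set F : Finset (Finset ℕ) := T.attach.image f with hF
  set A₀ : Finset (Finset ℕ) := A.filter (fun B => ¬ B.card = r) with hA₀
  have hA₀mem : ∀ B ∈ A₀, B ∈ A ∧ r + 1 ≤ B.card := by
    intro B hB
    rw [hA₀, Finset.mem_filter] at hB
    have := hmin B hB.1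
    have h2 := hB.2
    exact ⟨hB.1, by omega⟩
  have hFmem : ∀ C ∈ F, ∃ B ∈ A, B.card = r ∧ B ⊆ C ∧ C ≠ B ∧ C.card = r + 1 ∧ PIndep n C := by
    intro C hC
    rw [hF, Finset.mem_image] at hC
    obtain ⟨B, hB, rfl⟩ := hC
    obtain ⟨h1, h2, h3, h4, _⟩ := hkey B (f B) (hft B)
    exact ⟨B.1, (hBT B).1, (hBT B).2, h1, h2, h3, h4⟩
  have hdisj : Disjoint A₀ F := by
    rw [Finset.disjoint_left]
    intro C hC hCF
    obtain ⟨B, hB, _, hsub, hne, _, _⟩ := hFmem C hCF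
    exact hanti hB ((hA₀mem C hC).1) (fun h => hne h.symm) hsub
  refine ⟨A₀ ∪ F, ?_, ?_, ?_, ?_, ?_⟩
  · intro B hB
    rcases Finset.mem_union.1 hB with hB | hB
    · exact hA B (hA₀mem B hB).1
    · obtain ⟨_, _, _, _, _, _, h⟩ := hFmem B hB
      exact h
  · intro X hX Y hY hne hsub
    rw [Finset.mem_coe, Finset.mem_union] at hX hY
    rcases hX with hX | hX <;> rcases hY with hY | hY
    · exact hanti ((hA₀mem X hX).1) ((hA₀mem Y hY).1) hne hsub
    · obtain ⟨_, _, _, _, _, hYc, _⟩ := hFmem Y hY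
      have hXc := (hA₀mem X hX).2
      have : X = Y := Finset.eq_of_subset_of_card_le hsub (by omega)
      exact hne this
    · obtain ⟨B, hB, hBc, hBX, hXne, hXc, _⟩ := hFmem X hX
      have hYc := (hA₀mem Y hY).2
      have hBne : B ≠ Y := by
        intro h
        rw [h] at hBc
        omega
      exact hanti hB ((hA₀mem Y hY).1) hBne (hBX.trans hsub)
    · obtain ⟨_, _, _, _, _, hXc, _⟩ := hFmem X hX
      obtain ⟨_, _, _, _, _, hYc, _⟩ := hFmem Y hY
      have : X = Y := Finset.eq_of_subset_of_card_le hsub (by omega)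
      exact hne this
  · have hcardF : F.card = T.card := by
      rw [hF, Finset.card_image_of_injective _ hfinj, Finset.card_attach]
    have hsplit : T.card + A₀.card = A.card := by
      rw [hT, hA₀]
      exact Finset.card_filter_add_card_filter_not _
    rw [Finset.card_union_of_disjoint hdisj]
    omega
  · intro B hB
    rcases Finset.mem_union.1 hB with hB | hB
    · exact (hA₀mem B hB).2
    · obtain ⟨_, _, _, _, _, hc, _⟩ := hFmem B hB
      omega
  · intro B hB
    rcases Finset.mem_union.1 hB with hB | hB
    · exact hub B (hA₀mem B hB).1
    · obtain ⟨_, _, _, _, _, hc, _⟩ := hFmem B hB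
      omega

lemma phase1 (n : ℕ) : ∀ M : ℕ, ∀ A : Finset (Finset ℕ),
    (∀ B ∈ A, PIndep n B) → IsAntichain (· ⊆ ·) (A : Set (Finset ℕ)) →
    (∀ B ∈ A, B.card ≤ M) →
    ∃ A' : Finset (Finset ℕ), (∀ B ∈ A', PIndep n B) ∧ IsAntichain (· ⊆ ·) (A' : Set (Finset ℕ)) ∧
      A.card ≤ A'.card ∧ ∀ B ∈ A', 3 * B.card ≤ n + 1 := by
  intro M
  induction M with
  | zero =>
    intro A hA ha hb
    exact ⟨A, hA, ha, le_rfl, fun B hB => by have := hb B hB; omega⟩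
  | succ M ih =>
    intro A hA ha hb
    by_cases hall : ∀ B ∈ A, 3 * B.card ≤ n + 1
    · exact ⟨A, hA, ha, le_rfl, hall⟩
    · push_neg at hall
      obtain ⟨B₀, hB₀, hc⟩ := hall
      have hcard := hb B₀ hB₀
      obtain ⟨A', h1, h2, h3, h4⟩ := stepDown n (M + 1) (by omega) A hA ha hb
      obtain ⟨A'', g1, g2, g3, g4⟩ := ih A' h1 h2 (fun B hB => by have := h4 B hB; omega)
      exact ⟨A'', g1, g2, le_trans h3 g3, g4⟩

lemma phase2 (n : ℕ) (hn : 2 ≤ n) : ∀ d : ℕ, ∀ A : Finset (Finset ℕ),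
    (∀ B ∈ A, PIndep n B) → IsAntichain (· ⊆ ·) (A : Set (Finset ℕ)) →
    (∀ B ∈ A, 3 * B.card ≤ n + 1) → (∀ B ∈ A, n ≤ 4 * B.card + d) →
    ∃ A' : Finset (Finset ℕ), (∀ B ∈ A', PIndep n B) ∧ IsAntichain (· ⊆ ·) (A' : Set (Finset ℕ)) ∧
      A.card ≤ A'.card ∧ ∀ B ∈ A', 3 * B.card ≤ n + 1 ∧ n ≤ 4 * B.card := by
  intro d
  induction d with
  | zero =>
    intro A hA ha hub hlb
    exact ⟨A, hA, ha, le_rfl, fun B hB => ⟨hub B hB, by have := hlb B hB; omega⟩⟩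
  | succ d ih =>
    intro A hA ha hub hlb
    by_cases hall : ∀ B ∈ A, n ≤ 4 * B.card
    · exact ⟨A, hA, ha, le_rfl, fun B hB => ⟨hub B hB, hall B hB⟩⟩
    · push_neg at hall
      obtain ⟨B₀, hB₀, hc⟩ := hall
      have hne : A.Nonempty := ⟨B₀, hB₀⟩
      set r := A.inf' hne Finset.card with hrdef
      have hrle : ∀ B ∈ A, r ≤ B.card := fun B hB => Finset.inf'_le _ hB
      have hr1 : 4 * r + 1 ≤ n := by
        have := hrle B₀ hB₀
        omega
      obtain ⟨B₁, hB₁, hB₁e⟩ := Finset.exists_mem_eq_inf' hne Finset.card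
      have hrd : n ≤ 4 * r + (d + 1) := by
        have := hlb B₁ hB₁
        omega
      obtain ⟨A', h1, h2, h3, h4, h5⟩ := stepUp n r hn hr1 A hA ha hrle hub
      obtain ⟨A'', g1, g2, g3, g4⟩ := ih A' h1 h2 h5
        (fun B hB => by have := h4 B hB; omega)
      exact ⟨A'', g1, g2, le_trans h3 g3, g4⟩

end AC

open AC in
theorem antichain_push_to_middle (n : ℕ) (hn : 2 ≤ n) (A : Finset (Finset ℕ))
    (hA : ∀ B ∈ A, PIndep n B)
    (hanti : IsAntichain (· ⊆ ·) (A : Set (Finset ℕ))) :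
    ∃ A' : Finset (Finset ℕ), (∀ B ∈ A', PIndep n B) ∧
      IsAntichain (· ⊆ ·) (A' : Set (Finset ℕ)) ∧
      A.card ≤ A'.card ∧
      ∀ B ∈ A', ((n : ℝ) - 1) / 4 < (B.card : ℝ) ∧ (B.card : ℝ) < ((n : ℝ) + 2) / 3 := by
  have hcards : ∀ B ∈ A, B.card ≤ n := by
    intro B hB
    have h := Finset.card_le_card (hA B hB).1
    rwa [Nat.card_Icc, Nat.add_sub_cancel] at h
  obtain ⟨A₁, h1, h2, h3, h4⟩ := phase1 n n A hA hanti hcards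
  obtain ⟨A₂, g1, g2, g3, g4⟩ := phase2 n hn n A₁ h1 h2 h4
    (fun B hB => by omega)
  refine ⟨A₂, g1, g2, le_trans h3 g3, ?_⟩
  intro B hB
  obtain ⟨hu, hl⟩ := g4 B hB
  constructor
  · rw [div_lt_iff₀ (by norm_num)]
    have : (n : ℝ) ≤ 4 * B.card := by exact_mod_cast hl
    linarith
  · rw [lt_div_iff₀ (by norm_num)]
    have : 3 * (B.card : ℝ) ≤ n + 1 := by exact_mod_cast hu
    linarith
end

section
/- For every n with 1 ≤ n ≤ 10, the maximum size of an antichain in Q(P_n) equals the maximum over r of the number of P_n-independent r-subsets of {1,...,n}, i.e., s(P_n) = max_r C(n-r+1, r). -/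
instance inst_s14 (n : ℕ) (A : Finset ℕ) : Decidable (PIndep n A) := by
  unfold PIndep; infer_instance

def Sfin (n : ℕ) : Finset (Finset ℕ) :=
  (Finset.Icc 1 n).powerset.filter (fun B => ∀ i ∈ B, i + 1 ∉ B)

lemma mem_Sfin {n : ℕ} {B : Finset ℕ} : B ∈ Sfin n ↔ PIndep n B := by
  simp [Sfin, PIndep, Finset.mem_filter, Finset.mem_powerset]

lemma lower (n : ℕ) (A : Finset (Finset ℕ)) (h1 : ∀ B ∈ A, PIndep n B)
    (h2 : ∀ B ∈ A, ∀ C ∈ A, B ≠ C → ¬ B ⊆ C) :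
    A.card ∈ { k : ℕ | ∃ A : Finset (Finset ℕ), (∀ B ∈ A, PIndep n B) ∧
          IsAntichain (· ⊆ ·) (A : Set (Finset ℕ)) ∧ A.card = k } := by
  exact ⟨A, h1, fun B hB C hC hne => h2 B hB C hC hne, rfl⟩

lemma upper (n : ℕ) (chains : List (List (Finset ℕ)))
    (H1 : ∀ B ∈ Sfin n, ∃ c ∈ chains, B ∈ c)
    (H2 : ∀ c ∈ chains, ∀ B ∈ c, ∀ C ∈ c, B ⊆ C ∨ C ⊆ B) :
    ∀ k ∈ { k : ℕ | ∃ A : Finset (Finset ℕ), (∀ B ∈ A, PIndep n B) ∧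
          IsAntichain (· ⊆ ·) (A : Set (Finset ℕ)) ∧ A.card = k },
      k ≤ chains.length := by
  classical
  rintro k ⟨A, hind, hanti, rfl⟩
  have key : ∀ B ∈ A, ∃ i : Fin chains.length, B ∈ chains.get i := by
    intro B hB
    obtain ⟨c, hc, hBc⟩ := H1 B (mem_Sfin.mpr (hind B hB))
    obtain ⟨i, hi⟩ := List.mem_iff_get.mp hc
    exact ⟨i, hi ▸ hBc⟩
  choose f hf using fun B (hB : B ∈ A) => key B hB
  have : A.card ≤ (Finset.range chains.length).card := by
    apply Finset.card_le_card_of_injOn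
      (fun B => if h : B ∈ A then (f B h).val else 0)
    · intro B hB
      simp [Finset.mem_coe.mp hB, Finset.mem_range, (f B hB).isLt]
    · intro B hB C hC hfe
      simp only [Finset.mem_coe] at hB hC
      simp only [dif_pos hB, dif_pos hC] at hfe
      by_contra hne
      have hieq : f B hB = f C hC := Fin.ext hfe
      have hBc := hf B hB
      have hCc := hf C hC
      rw [hieq] at hBc
      have hcmem : chains.get (f C hC) ∈ chains := chains.get_mem _
      rcases H2 _ hcmem B hBc C hCc with h | h
      · exact hanti hB hC hne h
      · exact hanti hC hB (Ne.symm hne) h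
  simpa using this

def chains1 : List (List (Finset ℕ)) := [
  [(∅ : Finset ℕ), {1}]]

-- chains n=1: N=1, chains=1

def chains2 : List (List (Finset ℕ)) := [
  [(∅ : Finset ℕ), {1}],
  [{2}]]

-- chains n=2: N=2, chains=2

def chains3 : List (List (Finset ℕ)) := [
  [(∅ : Finset ℕ), {1}, {1, 3}],
  [{2}],
  [{3}]]

-- chains n=3: N=3, chains=3

def chains4 : List (List (Finset ℕ)) := [
  [(∅ : Finset ℕ), {1}, {1, 4}],
  [{2}, {2, 4}],
  [{3}, {1, 3}],
  [{4}]]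

-- chains n=4: N=4, chains=4

def chains5 : List (List (Finset ℕ)) := [
  [(∅ : Finset ℕ), {1}, {1, 3}, {1, 3, 5}],
  [{2}, {2, 4}],
  [{3}, {3, 5}],
  [{4}, {1, 4}],
  [{5}, {1, 5}],
  [{2, 5}]]

-- chains n=5: N=6, chains=6

def chains6 : List (List (Finset ℕ)) := [
  [(∅ : Finset ℕ), {1}, {1, 3}, {1, 3, 6}],
  [{2}, {2, 4}, {2, 4, 6}],
  [{3}, {3, 5}],
  [{4}, {1, 4}, {1, 4, 6}],
  [{5}, {1, 5}, {1, 3, 5}],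
  [{6}, {1, 6}],
  [{2, 5}],
  [{2, 6}],
  [{3, 6}],
  [{4, 6}]]

-- chains n=6: N=10, chains=10

def chains7 : List (List (Finset ℕ)) := [
  [(∅ : Finset ℕ), {1}, {1, 3}, {1, 3, 5, 7}],
  [{2}, {2, 4}, {2, 4, 7}],
  [{3}, {3, 5}, {3, 5, 7}],
  [{4}, {1, 4}, {1, 4, 7}],
  [{5}, {1, 5}, {1, 3, 5}],
  [{6}, {1, 6}, {1, 4, 6}],
  [{7}, {1, 7}, {1, 5, 7}],
  [{2, 5}, {2, 5, 7}],
  [{2, 6}, {2, 4, 6}],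
  [{2, 7}],
  [{3, 6}, {1, 3, 6}],
  [{3, 7}, {1, 3, 7}],
  [{4, 6}],
  [{4, 7}],
  [{5, 7}]]

-- chains n=7: N=15, chains=15

def chains8 : List (List (Finset ℕ)) := [
  [(∅ : Finset ℕ), {1}, {1, 3}, {1, 3, 5}, {1, 3, 5, 8}],
  [{2}, {2, 4}, {2, 4, 8}],
  [{3}, {3, 5}, {3, 5, 8}],
  [{4}, {1, 4}, {1, 4, 6}, {1, 4, 6, 8}],
  [{5}, {1, 5}, {1, 5, 7}],
  [{6}, {1, 6}, {1, 3, 6}, {1, 3, 6, 8}],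
  [{7}, {1, 7}, {1, 3, 7}, {1, 3, 5, 7}],
  [{8}, {1, 8}, {1, 4, 8}],
  [{2, 5}, {2, 5, 8}],
  [{2, 6}, {2, 4, 6, 8}],
  [{2, 7}, {2, 4, 7}],
  [{2, 8}, {2, 6, 8}],
  [{3, 6}, {3, 6, 8}],
  [{3, 7}, {3, 5, 7}],
  [{3, 8}, {1, 3, 8}],
  [{4, 6}, {2, 4, 6}],
  [{4, 7}, {1, 4, 7}],
  [{4, 8}, {4, 6, 8}],
  [{5, 7}, {2, 5, 7}],
  [{5, 8}, {1, 5, 8}],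
  [{6, 8}, {1, 6, 8}]]

-- chains n=8: N=21, chains=21

def chains9 : List (List (Finset ℕ)) := [
  [(∅ : Finset ℕ), {1}, {1, 3}, {1, 3, 6}, {1, 3, 6, 9}],
  [{2}, {2, 4}, {2, 4, 6}, {2, 4, 6, 9}],
  [{3}, {3, 5}, {1, 3, 5}, {1, 3, 5, 7, 9}],
  [{4}, {1, 4}, {1, 4, 7}, {1, 4, 7, 9}],
  [{5}, {1, 5}, {1, 5, 7}, {1, 5, 7, 9}],
  [{6}, {1, 6}, {1, 4, 6}, {1, 4, 6, 9}],
  [{7}, {1, 7}, {1, 3, 7}, {1, 3, 5, 7}],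
  [{8}, {1, 8}, {1, 3, 8}, {1, 3, 6, 8}],
  [{9}, {1, 9}, {1, 3, 9}, {1, 3, 7, 9}],
  [{2, 5}, {2, 5, 8}],
  [{2, 6}, {2, 6, 8}],
  [{2, 7}, {2, 7, 9}],
  [{2, 8}, {2, 4, 8}, {2, 4, 6, 8}],
  [{2, 9}, {2, 4, 9}],
  [{3, 6}, {3, 6, 8}],
  [{3, 7}, {3, 5, 7}, {3, 5, 7, 9}],
  [{3, 8}, {3, 5, 8}],
  [{3, 9}, {3, 5, 9}],
  [{4, 6}, {4, 6, 8}],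
  [{4, 7}, {2, 4, 7}, {2, 4, 7, 9}],
  [{4, 8}, {1, 4, 8}, {1, 4, 6, 8}],
  [{4, 9}, {1, 4, 9}],
  [{5, 7}, {2, 5, 7}, {2, 5, 7, 9}],
  [{5, 8}, {1, 5, 8}, {1, 3, 5, 8}],
  [{5, 9}, {1, 5, 9}, {1, 3, 5, 9}],
  [{6, 8}, {1, 6, 8}],
  [{6, 9}, {1, 6, 9}],
  [{7, 9}, {1, 7, 9}],
  [{2, 5, 9}],
  [{2, 6, 9}],
  [{3, 6, 9}],
  [{3, 7, 9}],
  [{4, 6, 9}],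
  [{4, 7, 9}],
  [{5, 7, 9}]]

-- chains n=9: N=35, chains=35

def chains10 : List (List (Finset ℕ)) := [
  [(∅ : Finset ℕ), {1}, {1, 3}, {1, 3, 5}, {1, 3, 5, 8}],
  [{2}, {2, 4}, {2, 4, 7}, {2, 4, 7, 10}],
  [{3}, {3, 5}, {3, 5, 8}, {3, 5, 8, 10}],
  [{4}, {1, 4}, {1, 4, 6}, {1, 4, 6, 10}],
  [{5}, {1, 5}, {1, 5, 7}, {1, 3, 5, 7, 10}],
  [{6}, {1, 6}, {1, 3, 6}, {1, 3, 6, 10}],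
  [{7}, {1, 7}, {1, 3, 7}, {1, 3, 5, 7}],
  [{8}, {1, 8}, {1, 5, 8}, {1, 3, 5, 8, 10}],
  [{9}, {1, 9}, {1, 3, 9}, {1, 3, 5, 7, 9}],
  [{10}, {1, 10}, {1, 3, 10}, {1, 3, 7, 10}],
  [{2, 5}, {2, 5, 8}, {2, 5, 8, 10}],
  [{2, 6}, {2, 6, 8}, {2, 6, 8, 10}],
  [{2, 7}, {2, 7, 9}],
  [{2, 8}, {2, 4, 8}, {2, 4, 6, 8}],
  [{2, 9}, {2, 4, 9}, {2, 4, 7, 9}],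
  [{2, 10}, {2, 4, 10}, {2, 4, 8, 10}],
  [{3, 6}, {3, 6, 8}, {1, 3, 6, 8, 10}],
  [{3, 7}, {3, 5, 7}, {3, 5, 7, 10}],
  [{3, 8}, {1, 3, 8}, {1, 3, 6, 8}],
  [{3, 9}, {3, 5, 9}, {3, 5, 7, 9}],
  [{3, 10}, {3, 5, 10}, {1, 3, 5, 10}],
  [{4, 6}, {2, 4, 6}, {2, 4, 6, 8, 10}],
  [{4, 7}, {1, 4, 7}, {1, 4, 7, 10}],
  [{4, 8}, {1, 4, 8}, {1, 4, 6, 8, 10}],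
  [{4, 9}, {1, 4, 9}, {1, 4, 7, 9}],
  [{4, 10}, {1, 4, 10}, {1, 4, 8, 10}],
  [{5, 7}, {2, 5, 7}, {2, 5, 7, 10}],
  [{5, 8}, {5, 8, 10}],
  [{5, 9}, {1, 5, 9}, {1, 3, 5, 9}],
  [{5, 10}, {1, 5, 10}, {1, 5, 8, 10}],
  [{6, 8}, {1, 6, 8}, {1, 4, 6, 8}],
  [{6, 9}, {1, 6, 9}, {1, 4, 6, 9}],
  [{6, 10}, {1, 6, 10}, {1, 6, 8, 10}],
  [{7, 9}, {1, 7, 9}, {1, 5, 7, 9}],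
  [{7, 10}, {1, 7, 10}, {1, 5, 7, 10}],
  [{8, 10}, {1, 8, 10}, {1, 3, 8, 10}],
  [{2, 5, 9}, {2, 5, 7, 9}],
  [{2, 5, 10}],
  [{2, 6, 9}, {2, 4, 6, 9}],
  [{2, 6, 10}, {2, 4, 6, 10}],
  [{2, 7, 10}],
  [{2, 8, 10}],
  [{3, 6, 9}, {1, 3, 6, 9}],
  [{3, 6, 10}, {3, 6, 8, 10}],
  [{3, 7, 9}, {1, 3, 7, 9}],
  [{3, 7, 10}],
  [{3, 8, 10}],
  [{4, 6, 8}, {4, 6, 8, 10}],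
  [{4, 6, 9}],
  [{4, 6, 10}],
  [{4, 7, 9}],
  [{4, 7, 10}],
  [{4, 8, 10}],
  [{5, 7, 9}],
  [{5, 7, 10}],
  [{6, 8, 10}]]

-- chains n=10: N=56, chains=56

def layer1 : Finset (Finset ℕ) := {{1}}

def layer2 : Finset (Finset ℕ) := {{1}, {2}}

def layer3 : Finset (Finset ℕ) := {{1}, {2}, {3}}

def layer4 : Finset (Finset ℕ) := {{1}, {2}, {3}, {4}}

def layer5 : Finset (Finset ℕ) := {{1, 3}, {1, 4}, {1, 5}, {2, 4}, {2, 5}, {3, 5}}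

def layer6 : Finset (Finset ℕ) := {{1, 3}, {1, 4}, {1, 5}, {1, 6}, {2, 4}, {2, 5}, {2, 6}, {3, 5}, {3, 6}, {4, 6}}

def layer7 : Finset (Finset ℕ) := {{1, 3}, {1, 4}, {1, 5}, {1, 6}, {1, 7}, {2, 4}, {2, 5}, {2, 6}, {2, 7}, {3, 5}, {3, 6}, {3, 7}, {4, 6}, {4, 7}, {5, 7}}

def layer8 : Finset (Finset ℕ) := {{1, 3}, {1, 4}, {1, 5}, {1, 6}, {1, 7}, {1, 8}, {2, 4}, {2, 5}, {2, 6}, {2, 7}, {2, 8}, {3, 5}, {3, 6}, {3, 7}, {3, 8}, {4, 6}, {4, 7}, {4, 8}, {5, 7}, {5, 8}, {6, 8}}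

def layer9 : Finset (Finset ℕ) := {{1, 3, 5}, {1, 3, 6}, {1, 3, 7}, {1, 3, 8}, {1, 3, 9}, {1, 4, 6}, {1, 4, 7}, {1, 4, 8}, {1, 4, 9}, {1, 5, 7}, {1, 5, 8}, {1, 5, 9}, {1, 6, 8}, {1, 6, 9}, {1, 7, 9}, {2, 4, 6}, {2, 4, 7}, {2, 4, 8}, {2, 4, 9}, {2, 5, 7}, {2, 5, 8}, {2, 5, 9}, {2, 6, 8}, {2, 6, 9}, {2, 7, 9}, {3, 5, 7}, {3, 5, 8}, {3, 5, 9}, {3, 6, 8}, {3, 6, 9}, {3, 7, 9}, {4, 6, 8}, {4, 6, 9}, {4, 7, 9}, {5, 7, 9}}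

def layer10 : Finset (Finset ℕ) := {{1, 3, 5}, {1, 3, 6}, {1, 3, 7}, {1, 3, 8}, {1, 3, 9}, {1, 3, 10}, {1, 4, 6}, {1, 4, 7}, {1, 4, 8}, {1, 4, 9}, {1, 4, 10}, {1, 5, 7}, {1, 5, 8}, {1, 5, 9}, {1, 5, 10}, {1, 6, 8}, {1, 6, 9}, {1, 6, 10}, {1, 7, 9}, {1, 7, 10}, {1, 8, 10}, {2, 4, 6}, {2, 4, 7}, {2, 4, 8}, {2, 4, 9}, {2, 4, 10}, {2, 5, 7}, {2, 5, 8}, {2, 5, 9}, {2, 5, 10}, {2, 6, 8}, {2, 6, 9}, {2, 6, 10}, {2, 7, 9}, {2, 7, 10}, {2, 8, 10}, {3, 5, 7}, {3, 5, 8}, {3, 5, 9}, {3, 5, 10}, {3, 6, 8}, {3, 6, 9}, {3, 6, 10}, {3, 7, 9}, {3, 7, 10}, {3, 8, 10}, {4, 6, 8}, {4, 6, 9}, {4, 6, 10}, {4, 7, 9}, {4, 7, 10}, {4, 8, 10}, {5, 7, 9}, {5, 7, 10}, {5, 8, 10}, {6, 8, 10}}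


set_option maxRecDepth 1000000 in
set_option maxHeartbeats 4000000 in
theorem sperner_fibCube_small (n : ℕ) (h1 : 1 ≤ n) (h2 : n ≤ 10) :
    IsGreatest
      { k : ℕ | ∃ A : Finset (Finset ℕ), (∀ B ∈ A, PIndep n B) ∧
          IsAntichain (· ⊆ ·) (A : Set (Finset ℕ)) ∧ A.card = k }
      ((Finset.range (n + 1)).sup (fun r => (n - r + 1).choose r)) := by
  interval_cases n
  · -- n = 1
    constructor
    · have e : ((Finset.range (1 + 1)).sup fun r => (1 - r + 1).choose r) = (layer1).card := by decide
      rw [Set.mem_setOf_eq] at *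
      rw [e]
      exact lower 1 layer1 (by decide) (by decide)
    · intro k hk
      have h := upper 1 chains1 (by decide) (by decide) k hk
      have e : ((Finset.range (1 + 1)).sup fun r => (1 - r + 1).choose r) = chains1.length := by decide
      rw [e]; exact h
  · -- n = 2
    constructor
    · have e : ((Finset.range (2 + 1)).sup fun r => (2 - r + 1).choose r) = (layer2).card := by decide
      rw [Set.mem_setOf_eq] at *
      rw [e]
      exact lower 2 layer2 (by decide) (by decide)
    · intro k hk
      have h := upper 2 chains2 (by decide) (by decide) k hk
      have e : ((Finset.range (2 + 1)).sup fun r => (2 - r + 1).choose r) = chains2.length := by decide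
      rw [e]; exact h
  · -- n = 3
    constructor
    · have e : ((Finset.range (3 + 1)).sup fun r => (3 - r + 1).choose r) = (layer3).card := by decide
      rw [Set.mem_setOf_eq] at *
      rw [e]
      exact lower 3 layer3 (by decide) (by decide)
    · intro k hk
      have h := upper 3 chains3 (by decide) (by decide) k hk
      have e : ((Finset.range (3 + 1)).sup fun r => (3 - r + 1).choose r) = chains3.length := by decide
      rw [e]; exact h
  · -- n = 4
    constructor
    · have e : ((Finset.range (4 + 1)).sup fun r => (4 - r + 1).choose r) = (layer4).card := by decide
      rw [Set.mem_setOf_eq] at *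
      rw [e]
      exact lower 4 layer4 (by decide) (by decide)
    · intro k hk
      have h := upper 4 chains4 (by decide) (by decide) k hk
      have e : ((Finset.range (4 + 1)).sup fun r => (4 - r + 1).choose r) = chains4.length := by decide
      rw [e]; exact h
  · -- n = 5
    constructor
    · have e : ((Finset.range (5 + 1)).sup fun r => (5 - r + 1).choose r) = (layer5).card := by decide
      rw [Set.mem_setOf_eq] at *
      rw [e]
      exact lower 5 layer5 (by decide) (by decide)
    · intro k hk
      have h := upper 5 chains5 (by decide) (by decide) k hk
      have e : ((Finset.range (5 + 1)).sup fun r => (5 - r + 1).choose r) = chains5.length := by decide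
      rw [e]; exact h
  · -- n = 6
    constructor
    · have e : ((Finset.range (6 + 1)).sup fun r => (6 - r + 1).choose r) = (layer6).card := by decide
      rw [Set.mem_setOf_eq] at *
      rw [e]
      exact lower 6 layer6 (by decide) (by decide)
    · intro k hk
      have h := upper 6 chains6 (by decide) (by decide) k hk
      have e : ((Finset.range (6 + 1)).sup fun r => (6 - r + 1).choose r) = chains6.length := by decide
      rw [e]; exact h
  · -- n = 7
    constructor
    · have e : ((Finset.range (7 + 1)).sup fun r => (7 - r + 1).choose r) = (layer7).card := by decide
      rw [Set.mem_setOf_eq] at *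
      rw [e]
      exact lower 7 layer7 (by decide) (by decide)
    · intro k hk
      have h := upper 7 chains7 (by decide) (by decide) k hk
      have e : ((Finset.range (7 + 1)).sup fun r => (7 - r + 1).choose r) = chains7.length := by decide
      rw [e]; exact h
  · -- n = 8
    constructor
    · have e : ((Finset.range (8 + 1)).sup fun r => (8 - r + 1).choose r) = (layer8).card := by decide
      rw [Set.mem_setOf_eq] at *
      rw [e]
      exact lower 8 layer8 (by decide) (by decide)
    · intro k hk
      have h := upper 8 chains8 (by decide) (by decide) k hk
      have e : ((Finset.range (8 + 1)).sup fun r => (8 - r + 1).choose r) = chains8.length := by decide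
      rw [e]; exact h
  · -- n = 9
    constructor
    · have e : ((Finset.range (9 + 1)).sup fun r => (9 - r + 1).choose r) = (layer9).card := by decide
      rw [Set.mem_setOf_eq] at *
      rw [e]
      exact lower 9 layer9 (by decide) (by decide)
    · intro k hk
      have h := upper 9 chains9 (by decide) (by decide) k hk
      have e : ((Finset.range (9 + 1)).sup fun r => (9 - r + 1).choose r) = chains9.length := by decide
      rw [e]; exact h
  · -- n = 10
    constructor
    · have e : ((Finset.range (10 + 1)).sup fun r => (10 - r + 1).choose r) = (layer10).card := by decide
      rw [Set.mem_setOf_eq] at *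
      rw [e]
      exact lower 10 layer10 (by decide) (by decide)
    · intro k hk
      have h := upper 10 chains10 (by decide) (by decide) k hk
      have e : ((Finset.range (10 + 1)).sup fun r => (10 - r + 1).choose r) = chains10.length := by decide
      rw [e]; exact h
end

section
/- Every antichain A in Q(P_n) satisfies |A| ≤ |Q(P_{n-1})| = F_{n+1}, where F denotes the Fibonacci sequence with F_0 = 0, F_1 = 1. -/
def Qset (m : ℕ) : Finset (Finset ℕ) :=
  (Finset.Icc 1 m).powerset.filter (fun S => ∀ i ∈ S, i + 1 ∉ S)

lemma mem_Qset {m : ℕ} {S : Finset ℕ} : S ∈ Qset m ↔ PIndep m S := by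
  simp [Qset, PIndep, Finset.mem_filter, Finset.mem_powerset]

lemma Qset_rec (m : ℕ) :
    Qset (m + 2) = Qset (m + 1) ∪ (Qset m).image (insert (m + 2)) := by
  ext S
  simp only [mem_Qset, PIndep, Finset.mem_union, Finset.mem_image, mem_Qset]
  constructor
  · rintro ⟨hsub, hind⟩
    by_cases h : m + 2 ∈ S
    · right
      refine ⟨S.erase (m + 2), ⟨⟨?_, ?_⟩, ?_⟩⟩
      · intro x hx
        have hx' := Finset.mem_of_mem_erase hx
        have := hsub hx'
        simp only [Finset.mem_Icc] at this ⊢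
        refine ⟨this.1, ?_⟩
        rcases Nat.lt_or_ge x (m + 1) with h1 | h1
        · omega
        · exfalso
          have hxne : x ≠ m + 2 := Finset.ne_of_mem_erase hx
          have hxm1 : x = m + 1 := by omega
          exact hind x hx' (hxm1 ▸ h)
      · intro i hi
        exact fun hc => hind i (Finset.mem_of_mem_erase hi) (Finset.mem_of_mem_erase hc)
      · exact Finset.insert_erase h
    · left
      refine ⟨fun x hx => ?_, hind⟩
      have := hsub hx
      have : x ≠ m + 2 := fun e => h (e ▸ hx)
      simp only [Finset.mem_Icc] at *
      omega
  · rintro (⟨hsub, hind⟩ | ⟨T, ⟨⟨hsub, hind⟩, rfl⟩⟩)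
    · exact ⟨hsub.trans (Finset.Icc_subset_Icc_right (by omega)), hind⟩
    · have hT2 : m + 2 ∉ T := fun hc => by
        have := hsub hc; simp only [Finset.mem_Icc] at this; omega
      constructor
      · intro x hx
        rcases Finset.mem_insert.mp hx with rfl | hx
        · simp [Finset.mem_Icc]
        · have := hsub hx; simp only [Finset.mem_Icc] at this ⊢; omega
      · intro i hi hc
        rcases Finset.mem_insert.mp hi with rfl | hi
        · rcases Finset.mem_insert.mp hc with h | h
          · omega
          · have := hsub h; simp [Finset.mem_Icc] at this
        · rcases Finset.mem_insert.mp hc with h | h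
          · have := hsub hi; simp [Finset.mem_Icc] at this; omega
          · exact hind i hi h
      
lemma Qset_card (m : ℕ) : (Qset m).card = Nat.fib (m + 2) := by
  induction m using Nat.twoStepInduction with
  | zero =>
      have : Qset 0 = {∅} := by
        ext S
        simp only [mem_Qset, PIndep, Finset.mem_singleton]
        constructor
        · rintro ⟨hsub, _⟩
          have h0 : Finset.Icc 1 0 = ∅ := by simp
          exact Finset.subset_empty.mp (h0 ▸ hsub)
        · rintro rfl; simp
      simp [this]
  | one =>
      have : Qset 1 = {∅, {1}} := by
        ext S
        simp only [mem_Qset, PIndep, Finset.Icc_self, Finset.mem_insert,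
          Finset.mem_singleton]
        constructor
        · rintro ⟨hsub, _⟩
          rcases Finset.subset_singleton_iff.mp hsub with h | h
          · exact Or.inl h
          · exact Or.inr h
        · rintro (rfl | rfl) <;> simp
      rw [this]
      rw [Finset.card_insert_of_notMem (Finset.notMem_singleton.mpr
        (Ne.symm (Finset.singleton_ne_empty 1))), Finset.card_singleton]
      decide
  | more m ih1 ih2 =>
      rw [Qset_rec m]
      rw [Finset.card_union_of_disjoint, Finset.card_image_of_injOn]
      · rw [ih1, ih2]; simp [Nat.fib_add_two]; ring
      · intro T hT U hU hTU
        have hT2 : m + 2 ∉ T := by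
          rcases mem_Qset.mp hT with ⟨hsub, _⟩
          intro hc; have := hsub hc; simp only [Finset.mem_Icc] at this; omega
        have hU2 : m + 2 ∉ U := by
          rcases mem_Qset.mp hU with ⟨hsub, _⟩
          intro hc; have := hsub hc; simp only [Finset.mem_Icc] at this; omega
        have := congrArg (fun S => Finset.erase S (m + 2)) hTU
        simpa [Finset.erase_insert, hT2, hU2] using this
      · rw [Finset.disjoint_left]
        intro S hS hS'
        rcases Finset.mem_image.mp hS' with ⟨T, _, rfl⟩
        rcases mem_Qset.mp hS with ⟨hsub, _⟩
        have := hsub (Finset.mem_insert_self (m + 2) T)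
        simp only [Finset.mem_Icc] at this
        omega

theorem antichain_le_fib (n : ℕ) (A : Finset (Finset ℕ))
    (hA : ∀ B ∈ A, PIndep n B)
    (hanti : IsAntichain (· ⊆ ·) (A : Set (Finset ℕ))) :
    A.card ≤ Nat.fib (n + 1) := by
  rcases n with _ | m
  · -- n = 0 : all sets are empty
    have : A ⊆ {∅} := by
      intro B hB
      rcases hA B hB with ⟨hsub, _⟩
      have hemp : Finset.Icc 1 0 = ∅ := by simp
      rw [hemp] at hsub
      have : B = ∅ := Finset.subset_empty.mp hsub
      simp [this]
    calc A.card ≤ ({∅} : Finset (Finset ℕ)).card := Finset.card_le_card this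
    _ = 1 := by simp
    _ ≤ Nat.fib 1 := by simp
  · -- n = m + 1; map B ↦ B.erase (m+1) into Qset m
    have key : A.card ≤ (Qset m).card := by
      apply Finset.card_le_card_of_injOn (fun B => B.erase (m + 1))
      · intro B hB
        rcases hA B hB with ⟨hsub, hind⟩
        rw [Finset.mem_coe, mem_Qset]
        constructor
        · intro x hx
          have hx' := Finset.mem_of_mem_erase hx
          have hxne := Finset.ne_of_mem_erase hx
          have := hsub hx'
          simp only [Finset.mem_Icc] at this ⊢
          omega
        · intro i hi hc
          exact hind i (Finset.mem_of_mem_erase hi) (Finset.mem_of_mem_erase hc)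
      · intro B hB C hC heq
        by_contra hne
        simp only at heq
        -- B and C agree off m+1
        have hoff : ∀ x, x ≠ m + 1 → (x ∈ B ↔ x ∈ C) := by
          intro x hx
          constructor
          · intro h
            have : x ∈ B.erase (m + 1) := Finset.mem_erase.mpr ⟨hx, h⟩
            rw [heq] at this
            exact Finset.mem_of_mem_erase this
          · intro h
            have : x ∈ C.erase (m + 1) := Finset.mem_erase.mpr ⟨hx, h⟩
            rw [← heq] at this
            exact Finset.mem_of_mem_erase this
        rcases Classical.em (m + 1 ∈ B) with hB1 | hB1 <;>
          rcases Classical.em (m + 1 ∈ C) with hC1 | hC1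
        · apply hne; ext x
          by_cases hx : x = m + 1
          · subst hx; simp [hB1, hC1]
          · exact hoff x hx
        · -- C ⊆ B, C ≠ B
          have hCB : C ⊆ B := by
            intro x hx
            by_cases hx' : x = m + 1
            · exact absurd (hx' ▸ hx) hC1
            · exact (hoff x hx').mpr hx
          exact hanti hC hB (Ne.symm hne) hCB
        · have hBC : B ⊆ C := by
            intro x hx
            by_cases hx' : x = m + 1
            · exact absurd (hx' ▸ hx) hB1
            · exact (hoff x hx').mp hx
          exact hanti hB hC hne hBC
        · apply hne; ext x
          by_cases hx : x = m + 1
          · subst hx; simp [hB1, hC1]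
          · exact hoff x hx
    calc A.card ≤ (Qset m).card := key
    _ = Nat.fib (m + 2) := Qset_card m
    _ = Nat.fib (m + 1 + 1) := rfl
end
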